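/- arXiv:2204.01530 — 2 statements merged into one kernel-verified Lean document; each statement's English description precedes it below -/
import Mathlib

section
/- Conversely, if the standard basis vector e_i lies in the column space of a matrix M, then deleting row i from M strictly decreases its rank. -/
open Matrix

/-- If the standard basis vector `e_i` lies in the column space of `M`, then deleting
row `i` from `M` strictly decreases its rank. -/
theorem single_mem_colSpace_imp_rank_drop {F : Type*} [Field F] {n₁ n₂ : ℕ}
    (M : Matrix (Fin n₁) (Fin n₂) F) (i : Fin n₁)
    (h : Pi.single i (1 : F) ∈ LinearMap.range M.mulVecLin) :
    (M.submatrix (fun k : {j : Fin n₁ // j ≠ i} => (k : Fin n₁)) id).rank < M.rank := by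
  classical
  set f : (Fin n₁ → F) →ₗ[F] ({j : Fin n₁ // j ≠ i} → F) :=
    LinearMap.funLeft F F (fun k => (k : Fin n₁)) with hf
  have hsub : (M.submatrix (fun k : {j : Fin n₁ // j ≠ i} => (k : Fin n₁)) id).mulVecLin
      = f.comp M.mulVecLin := by
    ext v k
    simp [hf, Matrix.mulVecLin, Matrix.mulVec, dotProduct, LinearMap.funLeft,
      Matrix.submatrix, Pi.single_apply, mul_ite, mul_one, mul_zero]
  rw [Matrix.rank, Matrix.rank, hsub, LinearMap.range_comp]
  set S := LinearMap.range M.mulVecLin with hS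
  have hrn := LinearMap.finrank_range_add_finrank_ker (f.domRestrict S)
  have hrange : LinearMap.range (f.domRestrict S) = S.map f := by
    ext x
    simp [LinearMap.mem_range, Submodule.mem_map]
  have hker : 0 < Module.finrank F (LinearMap.ker (f.domRestrict S)) := by
    rw [Module.finrank_pos_iff (R := F) (M := LinearMap.ker (f.domRestrict S))]
    have hmem : (⟨Pi.single i (1 : F), h⟩ : S) ∈ LinearMap.ker (f.domRestrict S) := by
      simp only [LinearMap.mem_ker, LinearMap.domRestrict_apply]
      ext k
      simp [hf, LinearMap.funLeft, Pi.single_eq_of_ne k.2]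
    refine nontrivial_of_ne ⟨_, hmem⟩ 0 ?_
    intro heq
    have h1 : Pi.single i (1 : F) = (0 : Fin n₁ → F) := by
      have := congrArg Subtype.val (congrArg Subtype.val heq)
      simpa using this
    have := congrFun h1 i
    simp at this
  rw [hrange] at hrn
  have hle : Module.finrank F (S.map f) < Module.finrank F S := by omega
  exact hle
end

section
/- Let U be the column space of a rank-r matrix M ⊆ ℝ^{n₁×n₂} and suppose a column x of M is not in the span of columns indexed by a set C with rank(M_{:C}) = d < r being possible. If i is chosen uniformly from [n₁]\R where R indexes rows with rank(M_{R:C}) = d, then the probability that the entry pattern reveals x ∉ span(M_{:C}) — i.e., that the residual of x after projection onto span(M_{:C}) along rows R is nonzero at coordinate i — is at least ψ(U)/n₁. -/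
open Matrix
open scoped ENNReal

/-- The sparsity number of a subspace. -/
noncomputable def sparsityNumber {F : Type*} [Field F] {m : Type*}
    (U : Submodule F (m → F)) : ℕ :=
  sInf {k | ∃ x ∈ U, x ≠ 0 ∧ {j | x j ≠ 0}.ncard = k}

/-- If a column `x = M_{:,j}` is not in the span of the columns indexed by `C`, and `w` is
the residual of `x` after projection onto `span(M_{:C})` along the rows in `R` (where
`rank M_{R:C} = rank M_{:C} = d`), then for `i` chosen uniformly from `[n₁]` the
probability that `w i ≠ 0` is at least `ψ(U)/n₁`, where `U` is the column space of `M`. -/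
theorem prob_residual_nonzero_ge {n₁ n₂ d : ℕ} [NeZero n₁]
    (M : Matrix (Fin n₁) (Fin n₂) ℝ)
    (C : Finset (Fin n₂)) (R : Finset (Fin n₁))
    (hRC : (M.submatrix (fun k : ↥R => (k : Fin n₁)) (fun k : ↥C => (k : Fin n₂))).rank = d)
    (hC : (M.submatrix id (fun k : ↥C => (k : Fin n₂))).rank = d)
    (j : Fin n₂)
    (hx : (fun i => M i j) ∉ Submodule.span ℝ ((fun k => fun i => M i k) '' (C : Set (Fin n₂))))
    (c : ↥C → ℝ) (w : Fin n₁ → ℝ)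
    (hw : w = fun i => M i j - ∑ k : ↥C, c k * M i (k : Fin n₂))
    (hwR : ∀ i ∈ R, w i = 0) :
    (sparsityNumber (LinearMap.range M.mulVecLin) : ℝ≥0∞) / n₁ ≤
      (PMF.uniformOfFintype (Fin n₁)).toOuterMeasure {i | w i ≠ 0} := by
  classical
  -- w is in the column space of M
  have hmem : w ∈ LinearMap.range M.mulVecLin := by
    refine ⟨(fun k => if k = j then (1 : ℝ) else 0) -
        fun k => ∑ k' : ↥C, if k = (k' : Fin n₂) then c k' else 0, ?_⟩
    funext i
    have hv : ∀ v : Fin n₂ → ℝ, M.mulVecLin v i = ∑ k, M i k * v k := fun v => rfl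
    rw [hw, hv]
    simp only [Pi.sub_apply, mul_sub, Finset.sum_sub_distrib, mul_ite, mul_one, mul_zero,
      Finset.sum_ite_eq', Finset.mem_univ, if_true, Finset.mul_sum]
    congr 1
    rw [Finset.sum_comm]
    refine Finset.sum_congr rfl fun k' _ => ?_
    simp [Finset.sum_ite_eq', mul_comm]
  -- w ≠ 0
  have hw0 : w ≠ 0 := by
    intro h
    apply hx
    have hcol : (fun i => M i j) = ∑ k : ↥C, c k • (fun i => M i (k : Fin n₂)) := by
      funext i
      have hi := congrFun h i
      rw [hw] at hi
      simp only [Pi.zero_apply] at hi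
      have := sub_eq_zero.mp hi
      simpa using this
    rw [hcol]
    refine Submodule.sum_mem _ fun k _ => Submodule.smul_mem _ _ ?_
    exact Submodule.subset_span ⟨(k : Fin n₂), k.2, rfl⟩
  -- sparsity bound
  have hs : sparsityNumber (LinearMap.range M.mulVecLin) ≤ {i | w i ≠ 0}.ncard :=
    Nat.sInf_le ⟨w, hmem, hw0, rfl⟩
  rw [PMF.toOuterMeasure_uniformOfFintype_apply, Fintype.card_fin]
  refine ENNReal.div_le_div_right ?_ _
  have hcard : {i | w i ≠ 0}.ncard = Fintype.card {i | w i ≠ 0} := by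
    rw [← Nat.card_coe_set_eq, Nat.card_eq_fintype_card]
  exact_mod_cast hcard ▸ hs
end
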